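/- arXiv:1502.00359 — 2 statements merged into one kernel-verified Lean document; each statement's English description precedes it below -/
import Mathlib

section
/- Let 1 ≤ k ≤ n and let G be a finite simple graph of order n such that λ_1*(G) + λ_2*(G) + ... + λ_k*(G) = (1 + √k)·n/2. Then k is a perfect square. -/
open Matrix BigOperators

/-- The eigenvalues (with multiplicity) of a real symmetric matrix, listed in
nondecreasing order (the empty list if the matrix is not Hermitian). -/
noncomputable def eigAsc {n : ℕ} (A : Matrix (Fin n) (Fin n) ℝ) : List ℝ := by
  classical
  exact if hA : A.IsHermitian then
    (Finset.univ.val.map hA.eigenvalues).sort (· ≤ ·)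
  else []

/-- `eigval A k` is the `k`-th largest eigenvalue of `A` (1-indexed). -/
noncomputable def eigval {n : ℕ} (A : Matrix (Fin n) (Fin n) ℝ) (k : ℕ) : ℝ :=
  (eigAsc A).getD (n - k) 0

/-- The singular values (absolute values of eigenvalues, with multiplicity) of a
real symmetric matrix, listed in nondecreasing order. -/
noncomputable def singAsc {n : ℕ} (A : Matrix (Fin n) (Fin n) ℝ) : List ℝ := by
  classical
  exact if hA : A.IsHermitian then
    (Finset.univ.val.map (fun i => |hA.eigenvalues i|)).sort (· ≤ ·)
  else []

/-- `singval A k` is the `k`-th largest singular value of `A` (1-indexed). -/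
noncomputable def singval {n : ℕ} (A : Matrix (Fin n) (Fin n) ℝ) (k : ℕ) : ℝ :=
  (singAsc A).getD (n - k) 0

/-- `graphEig G k` is the `k`-th largest adjacency eigenvalue of `G` (1-indexed). -/
noncomputable def graphEig {n : ℕ} (G : SimpleGraph (Fin n)) (k : ℕ) : ℝ := by
  classical
  exact eigval (G.adjMatrix ℝ) k

/-- `graphSing G k` is the `k`-th largest singular value of `G` (1-indexed). -/
noncomputable def graphSing {n : ℕ} (G : SimpleGraph (Fin n)) (k : ℕ) : ℝ := by
  classical
  exact singval (G.adjMatrix ℝ) k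

section Aux

lemma stmt17_sorted_getD_anti {L : List ℝ} (hs : L.Pairwise (· ≤ ·)) {i j : ℕ} (hij : i ≤ j)
    (hj : j < L.length) :
    L.getD (L.length - 1 - j) 0 ≤ L.getD (L.length - 1 - i) 0 := by
  have hi : i < L.length := lt_of_le_of_lt hij hj
  have ha : L.length - 1 - j < L.length := by omega
  have hb : L.length - 1 - i < L.length := by omega
  rw [List.getD_eq_getElem _ _ ha, List.getD_eq_getElem _ _ hb]
  exact hs.rel_get_of_le (by simp [Fin.le_def]; omega)

lemma stmt17_sum_f_getD (L : List ℝ) (f : ℝ → ℝ) :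
    ∑ j ∈ Finset.range L.length, f (L.getD (L.length - 1 - j) 0) = (L.map f).sum := by
  rw [Finset.sum_range_reflect (fun m => f (L.getD m 0)) L.length]
  have h1 : L.map f = List.ofFn (fun i : Fin L.length => f (L.get i)) := by
    conv_lhs => rw [← List.ofFn_get L]
    rw [List.map_ofFn]
    rfl
  rw [h1, List.sum_ofFn, ← Fin.sum_univ_eq_sum_range (fun m => f (L.getD m 0)) L.length]
  refine Finset.sum_congr rfl fun j _ => ?_
  rw [List.getD_eq_get _ _ j]

lemma stmt17_mem_iff_getD {L : List ℝ} {x : ℝ} :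
    x ∈ L ↔ ∃ j, j < L.length ∧ L.getD (L.length - 1 - j) 0 = x := by
  rw [List.mem_iff_get]
  constructor
  · rintro ⟨i, rfl⟩
    refine ⟨L.length - 1 - i, by omega, ?_⟩
    have hi : (i : ℕ) < L.length := i.2
    have : L.length - 1 - (L.length - 1 - i) = i := by omega
    rw [this, List.getD_eq_get _ _ i]
  · rintro ⟨j, hj, hx⟩
    have ha : L.length - 1 - j < L.length := by omega
    exact ⟨⟨L.length - 1 - j, ha⟩, by rw [← hx, List.getD_eq_get _ _ ⟨L.length - 1 - j, ha⟩]⟩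

variable {n : ℕ} {A : Matrix (Fin n) (Fin n) ℝ} (hA : A.IsHermitian)

lemma stmt17_spectral_real :
    A = (hA.eigenvectorUnitary : Matrix (Fin n) (Fin n) ℝ) * Matrix.diagonal hA.eigenvalues
      * star (hA.eigenvectorUnitary : Matrix (Fin n) (Fin n) ℝ) := by
  have h := hA.spectral_theorem
  rwa [RCLike.ofReal_real_eq_id, Function.id_comp] at h

lemma stmt17_trace_eq : ∑ i, hA.eigenvalues i = A.trace := by
  set U : Matrix (Fin n) (Fin n) ℝ := (hA.eigenvectorUnitary : Matrix (Fin n) (Fin n) ℝ) with hU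
  have h1 : star U * U = 1 := Matrix.UnitaryGroup.star_mul_self _
  calc ∑ i, hA.eigenvalues i = (Matrix.diagonal hA.eigenvalues).trace := by
        rw [Matrix.trace_diagonal]
    _ = (star U * (U * Matrix.diagonal hA.eigenvalues)).trace := by
        rw [← Matrix.mul_assoc, h1, Matrix.one_mul]
    _ = ((U * Matrix.diagonal hA.eigenvalues) * star U).trace := (Matrix.trace_mul_comm _ _).symm
    _ = A.trace := by rw [← stmt17_spectral_real hA]

lemma stmt17_trace_sq_eq : ∑ i, hA.eigenvalues i ^ 2 = (A * A).trace := by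
  set U : Matrix (Fin n) (Fin n) ℝ := (hA.eigenvectorUnitary : Matrix (Fin n) (Fin n) ℝ) with hU
  set D := Matrix.diagonal hA.eigenvalues with hD
  have h1 : star U * U = 1 := Matrix.UnitaryGroup.star_mul_self _
  have hAA : A * A = U * (D * D) * star U := by
    conv_lhs => rw [stmt17_spectral_real hA]
    simp only [Matrix.mul_assoc]
    rw [← Matrix.mul_assoc (star U) U, h1, Matrix.one_mul]
  have hDD : D * D = Matrix.diagonal (fun i => hA.eigenvalues i ^ 2) := by
    rw [hD, Matrix.diagonal_mul_diagonal]
    exact congrArg _ (funext fun i => (sq (hA.eigenvalues i)).symm)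
  calc ∑ i, hA.eigenvalues i ^ 2 = (D * D).trace := by rw [hDD, Matrix.trace_diagonal]
    _ = (star U * (U * (D * D))).trace := by rw [← Matrix.mul_assoc, h1, Matrix.one_mul]
    _ = ((U * (D * D)) * star U).trace := (Matrix.trace_mul_comm _ _).symm
    _ = (A * A).trace := by rw [hAA]

lemma stmt17_rayleigh : ∃ y : Fin n → ℝ, (∑ i, y i ^ 2 = n) ∧
    (∑ i, hA.eigenvalues i * y i ^ 2 = ∑ p, ∑ q, A p q) := by
  set U : Matrix (Fin n) (Fin n) ℝ := (hA.eigenvectorUnitary : Matrix (Fin n) (Fin n) ℝ) with hU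
  set D := Matrix.diagonal hA.eigenvalues with hD
  have h2 : U * star U = 1 := Matrix.mem_unitaryGroup_iff.mp hA.eigenvectorUnitary.2
  have hsUT : star U = Uᵀ := by
    rw [Matrix.star_eq_conjTranspose, Matrix.conjTranspose_eq_transpose_of_trivial]
  set u : Fin n → ℝ := fun _ => 1 with hu
  set y : Fin n → ℝ := star U *ᵥ u with hy
  have hvm : ∀ (B : Matrix (Fin n) (Fin n) ℝ) (x : Fin n → ℝ), x ᵥ* B = Bᵀ *ᵥ x := by
    intro B x; rw [Matrix.mulVec_transpose]
  refine ⟨y, ?_, ?_⟩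
  · have h3 : ∑ i, y i ^ 2 = y ⬝ᵥ y := by simp [dotProduct, sq]
    rw [h3]
    calc y ⬝ᵥ y = (y ᵥ* star U) ⬝ᵥ u := by rw [hy, Matrix.dotProduct_mulVec]
      _ = ((star U)ᵀ *ᵥ y) ⬝ᵥ u := by rw [hvm]
      _ = (U *ᵥ y) ⬝ᵥ u := by rw [hsUT, Matrix.transpose_transpose]
      _ = ((U * star U) *ᵥ u) ⬝ᵥ u := by rw [hy, Matrix.mulVec_mulVec]
      _ = u ⬝ᵥ u := by rw [h2, Matrix.one_mulVec]
      _ = n := by simp [hu, dotProduct]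
  · have hW : u ⬝ᵥ (A *ᵥ u) = ∑ p, ∑ q, A p q := by
      simp [dotProduct, Matrix.mulVec, hu]
    rw [← hW]
    conv_rhs => rw [stmt17_spectral_real hA]
    calc ∑ i, hA.eigenvalues i * y i ^ 2 = y ⬝ᵥ (D *ᵥ y) := by
          simp only [dotProduct, Matrix.mulVec_diagonal, hD]
          exact Finset.sum_congr rfl fun i _ => by ring
      _ = (u ᵥ* U) ⬝ᵥ (D *ᵥ y) := by rw [hvm, ← hsUT, hy]
      _ = u ⬝ᵥ (U *ᵥ (D *ᵥ y)) := (Matrix.dotProduct_mulVec u U _).symm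
      _ = u ⬝ᵥ ((U * D * star U) *ᵥ u) := by rw [hy, Matrix.mulVec_mulVec, Matrix.mulVec_mulVec]

end Aux


lemma stmt17_core (m n t R Q P sk s M0 : ℝ)
    (hm : 1 ≤ m) (hn : 2 ≤ n)
    (hsk2 : sk^2 = m + 1) (hsk0 : 0 ≤ sk)
    (hs : s = n / (2*sk)) (hM0 : M0 = (1+sk)*n/2)
    (hS : t + R = M0)
    (ht0 : 0 ≤ t) (hR0 : 0 ≤ R) (hQ0 : 0 ≤ Q)
    (hCS : R^2 ≤ m * Q) (hPQ : t^2 + Q ≤ P) (hPn : P ≤ n * t) :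
    (1 ≤ sk) ∧ (0 < s) ∧ (t = s * (sk+1)) ∧ (s < t) ∧ (Q = n*t - t^2) ∧ (P = n*t)
      ∧ (R = m * s) ∧ (R^2 = m * Q) ∧ (Q = m * s^2) ∧ (m * s^2 < t^2) := by
  have hmR : (0:ℝ) < m := by linarith
  have hsk1 : 1 ≤ sk := by
    by_contra hc
    push_neg at hc
    have h1 : sk^2 < 1 := pow_lt_one₀ hsk0 hc (by norm_num)
    linarith
  have hsk0' : 0 < sk := by linarith
  have hnR : (0:ℝ) < n := by linarith
  have hs0 : 0 < s := by rw [hs]; positivity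
  have htn : t ≤ n := by
    by_contra hc
    push_neg at hc
    have ht0' : 0 < t := by linarith
    have h1 : n * t < t * t := mul_lt_mul_of_pos_right hc ht0'
    have h2 : t * t = t^2 := by ring
    linarith
  have hQb : Q ≤ n * t - t^2 := by linarith
  have hM0t : t ≤ M0 := by
    have h1 : 2 * n ≤ (1 + sk) * n := mul_le_mul_of_nonneg_right (by linarith) (le_of_lt hnR)
    rw [hM0]; linarith
  have hnt0 : 0 ≤ n * t - t^2 := by
    have h1 : 0 ≤ t * (n - t) := mul_nonneg ht0 (by linarith)
    have h2 : t * (n - t) = n * t - t^2 := by ring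
    linarith
  set a := Real.sqrt (m * Q) with hadef
  set b := Real.sqrt (m * (n * t - t^2)) with hbdef
  have ch1 : R ≤ a := by
    rw [hadef, ← Real.sqrt_sq hR0]
    exact Real.sqrt_le_sqrt hCS
  have ch2 : a ≤ b :=
    Real.sqrt_le_sqrt (mul_le_mul_of_nonneg_left hQb (le_of_lt hmR))
  have hmsk : m = sk^2 - 1 := by linarith
  have hkey : m * (n * t - t^2) ≤ (M0 - t)^2 := by
    rw [hmsk, hM0]
    have hid : ((1+sk)*n/2 - t)^2 - (sk^2-1)*(n*t-t^2) = (sk*t - (sk+1)*n/2)^2 := by ring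
    have hsq := sq_nonneg (sk*t - (sk+1)*n/2)
    linarith only [hid, hsq]
  have ch3 : b ≤ M0 - t := by
    rw [hbdef, ← Real.sqrt_sq (by linarith : (0:ℝ) ≤ M0 - t)]
    exact Real.sqrt_le_sqrt hkey
  have hRM : R = M0 - t := by linarith
  have e3 : b = M0 - t := le_antisymm ch3 (by rw [← hRM]; exact le_trans ch1 ch2)
  have e2 : a = b := le_antisymm ch2 (by rw [e3, ← hRM]; exact ch1)
  have e1 : R = a := le_antisymm ch1 (by rw [e2, e3, ← hRM])
  have hb2 : m * (n * t - t^2) = (M0 - t)^2 := by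
    rw [← Real.sq_sqrt (mul_nonneg (le_of_lt hmR) hnt0), ← hbdef, e3]
  have hskt : sk * t = (sk + 1) * n / 2 := by
    have hz : (sk * t - (sk + 1) * n / 2)^2 = 0 := by
      rw [hmsk, hM0] at hb2
      linear_combination (-1 : ℝ) * hb2
    have h1 := pow_eq_zero_iff (n := 2) (by norm_num) |>.mp hz
    linarith
  have haQ : m * Q = m * (n * t - t^2) := by
    rw [← Real.sq_sqrt (mul_nonneg (le_of_lt hmR) hQ0), ← hadef, e2, hbdef,
      Real.sq_sqrt (mul_nonneg (le_of_lt hmR) hnt0)]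
  have hQval : Q = n * t - t^2 := mul_left_cancel₀ (ne_of_gt hmR) haQ
  have hRQ : R^2 = m * Q := by
    rw [e1, Real.sq_sqrt (mul_nonneg (le_of_lt hmR) hQ0)]
  have hPval : P = n * t := by linarith
  have hts : t = s * (sk + 1) := by
    rw [hs]; field_simp; linarith [hskt]
  have hst : s < t := by
    have h1 : s * 1 ≤ s * sk := mul_le_mul_of_nonneg_left hsk1 (le_of_lt hs0)
    have h2 : t - s = s * sk := by rw [hts]; ring
    linarith
  have hRm : R = m * s := by
    rw [hRM, hM0, hts, hs, hmsk]; field_simp; ring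
  have hQm : Q = m * s^2 := by
    rw [hQval, hts, hs, hmsk]; field_simp; ring
  have hQlt : m * s^2 < t^2 := by
    rw [hts, hmsk]
    have hid : (s*(sk+1))^2 - (sk^2-1)*s^2 = s^2*(2*sk+2) := by ring
    have hpos : 0 < s^2*(2*sk+2) := mul_pos (pow_pos hs0 2) (by linarith)
    linarith only [hid, hpos]
  exact ⟨hsk1, hs0, hts, hst, hQval, hPval, hRm, hRQ, hQm, hQlt⟩


theorem stmt17 (k n : ℕ) (hk : 1 ≤ k) (hkn : k ≤ n) (G : SimpleGraph (Fin n))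
    (h : ∑ i ∈ Finset.range k, graphSing G (i + 1) =
      (1 + Real.sqrt k) * n / 2) :
    IsSquare k := by
  classical
  obtain ⟨m, rfl⟩ : ∃ m, k = m + 1 := ⟨k - 1, by omega⟩
  rcases Nat.eq_zero_or_pos m with hm0 | hm1
  · exact ⟨1, by omega⟩
  -- now k = m + 1 with m ≥ 1
  have hn2 : 2 ≤ n := le_trans (by omega) hkn
  have hn0 : 0 < n := by omega
  set A := G.adjMatrix ℝ with hAdef
  have hA : A.IsHermitian := by
    rw [Matrix.IsHermitian, Matrix.conjTranspose_eq_transpose_of_trivial]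
    exact G.isSymm_adjMatrix
  set e := hA.eigenvalues with he
  set L : List ℝ := (Finset.univ.val.map (fun i => |e i|)).sort (· ≤ ·) with hLdef
  have hLsing : singAsc A = L := by
    unfold singAsc
    rw [dif_pos hA]
  have hlen : L.length = n := by
    rw [hLdef, Multiset.length_sort, Multiset.card_map]
    simp
  have hsorted : L.Pairwise (· ≤ ·) := Multiset.pairwise_sort _ _
  set σ : ℕ → ℝ := fun j => L.getD (n - 1 - j) 0 with hσdef
  have hsig : ∀ i : ℕ, graphSing G (i + 1) = σ i := by
    intro i
    show (singAsc A).getD (n - (i+1)) 0 = σ i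
    rw [hLsing, hσdef]
    congr 1
    omega
  have hanti : ∀ i j : ℕ, i ≤ j → j < n → σ j ≤ σ i := by
    intro i j hij hj
    have := stmt17_sorted_getD_anti hsorted hij (by rw [hlen]; exact hj)
    rw [hlen] at this
    exact this
  have hmem1 : ∀ i : Fin n, ∃ j, j < n ∧ σ j = |e i| := by
    intro i
    have hx : |e i| ∈ L := by
      rw [hLdef, Multiset.mem_sort, Multiset.mem_map]
      exact ⟨i, Finset.mem_univ i, rfl⟩
    obtain ⟨j, hj, hjx⟩ := stmt17_mem_iff_getD.mp hx
    rw [hlen] at hj hjx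
    exact ⟨j, hj, hjx⟩
  have hmem2 : ∀ j, j < n → ∃ i : Fin n, |e i| = σ j := by
    intro j hj
    have hx : σ j ∈ L := by
      apply stmt17_mem_iff_getD.mpr
      refine ⟨j, by rw [hlen]; exact hj, by rw [hlen]⟩
    rw [hLdef, Multiset.mem_sort, Multiset.mem_map] at hx
    obtain ⟨i, _, hi⟩ := hx
    exact ⟨i, hi⟩
  have hsumf : ∀ f : ℝ → ℝ, ∑ j ∈ Finset.range n, f (σ j) = ∑ i, f (|e i|) := by
    intro f
    have h1 := stmt17_sum_f_getD L f
    rw [hlen] at h1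
    rw [hσdef]
    rw [h1, hLdef]
    have h2 : ((Finset.univ.val.map (fun i : Fin n => |e i|)).sort (· ≤ ·) : Multiset ℝ)
        = Finset.univ.val.map (fun i : Fin n => |e i|) := Multiset.sort_eq _ _
    calc (((Finset.univ.val.map (fun i : Fin n => |e i|)).sort (· ≤ ·)).map f).sum
        = (((Finset.univ.val.map (fun i : Fin n => |e i|)).sort (· ≤ ·) : Multiset ℝ).map f).sum := by
          rw [Multiset.map_coe, Multiset.sum_coe]
      _ = ((Finset.univ.val.map (fun i : Fin n => |e i|)).map f).sum := by rw [h2]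
      _ = ∑ i, f (|e i|) := by rw [Multiset.map_map]; rfl
  -- scalar quantities
  push_cast at h
  set sk := Real.sqrt ((m:ℝ) + 1) with hskdef
  have hsk2 : sk^2 = (m:ℝ) + 1 := Real.sq_sqrt (by positivity)
  have hsk0 : 0 ≤ sk := Real.sqrt_nonneg _
  have hmR : (0:ℝ) < m := by exact_mod_cast hm1
  set t := σ 0 with htdef
  set R := ∑ i ∈ Finset.range m, σ (i+1) with hRdef
  set Q := ∑ i ∈ Finset.range m, σ (i+1)^2 with hQdef
  set P := ∑ j ∈ Finset.range n, σ j ^2 with hPdef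
  set s : ℝ := (n:ℝ) / (2 * sk) with hsdef
  set M0 : ℝ := (1 + sk) * (n:ℝ) / 2 with hM0def
  have hS : t + R = M0 := by
    have h1 : ∑ i ∈ Finset.range (m+1), graphSing G (i+1) = ∑ i ∈ Finset.range (m+1), σ i :=
      Finset.sum_congr rfl fun i _ => hsig i
    rw [h1, Finset.sum_range_succ' σ m] at h
    rw [htdef, hRdef]
    linarith only [h]
  have hσpos : ∀ j, j < n → 0 ≤ σ j := fun j hj => by
    obtain ⟨i, hi⟩ := hmem2 j hj
    rw [← hi]; exact abs_nonneg _
  have ht0 : 0 ≤ t := hσpos 0 hn0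
  have hR0 : 0 ≤ R := Finset.sum_nonneg fun i hi =>
    hσpos _ (by have : i < m := Finset.mem_range.mp hi; omega)
  have hQ0 : 0 ≤ Q := Finset.sum_nonneg fun i _ => sq_nonneg _
  have hmax : ∀ i : Fin n, |e i| ≤ t := by
    intro i
    obtain ⟨j, hj, hji⟩ := hmem1 i
    rw [← hji]
    exact hanti 0 j (Nat.zero_le j) hj
  have hCS : R^2 ≤ (m:ℝ) * Q := by
    have h1 : R^2 ≤ ((Finset.range m).card : ℝ) * Q := sq_sum_le_card_mul_sum_sq
    rwa [Finset.card_range] at h1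
  have hP_e : P = ∑ i, e i ^ 2 := by
    rw [hPdef, hsumf (fun x => x^2)]
    exact Finset.sum_congr rfl fun i _ => sq_abs _
  have hAA : ∑ i, e i ^2 = ∑ p, ∑ q, A p q := by
    rw [he, stmt17_trace_sq_eq hA]
    have hent : ∀ p q, A p q * A q p = A p q := by
      intro p q
      by_cases hpq : G.Adj p q
      · simp [hAdef, SimpleGraph.adjMatrix_apply, hpq, hpq.symm]
      · simp [hAdef, SimpleGraph.adjMatrix_apply, hpq]
    calc (A*A).trace = ∑ p, ∑ q, A p q * A q p := by
          simp [Matrix.trace, Matrix.diag, Matrix.mul_apply]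
      _ = ∑ p, ∑ q, A p q :=
          Finset.sum_congr rfl fun p _ => Finset.sum_congr rfl fun q _ => hent p q
  obtain ⟨y, hy1, hy2⟩ := stmt17_rayleigh hA
  have hPy : P = ∑ i, e i * y i ^2 := by rw [hP_e, hAA, ← hy2]
  have hPn : P ≤ (n:ℝ) * t := by
    have hc : ∑ i, e i * y i ^2 ≤ ∑ i, t * y i ^2 := Finset.sum_le_sum fun i _ =>
      mul_le_mul_of_nonneg_right (le_trans (le_abs_self _) (hmax i)) (sq_nonneg _)
    have hd : ∑ i, t * y i ^2 = t * ∑ i, y i ^2 := by rw [Finset.mul_sum]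
    rw [hPy]
    rw [hd, hy1] at hc
    linarith only [hc]
  have hPQ : t^2 + Q ≤ P := by
    have hsplit : ∑ j ∈ Finset.range (m+1), σ j ^2 = Q + t^2 :=
      Finset.sum_range_succ' (fun j => σ j ^2) m
    have hsub : ∑ j ∈ Finset.range (m+1), σ j ^2 ≤ P := by
      rw [hPdef]
      apply Finset.sum_le_sum_of_subset_of_nonneg (Finset.range_subset_range.mpr (by omega))
      intro j _ _; exact sq_nonneg _
    rw [hsplit] at hsub
    linarith only [hsub]
  have hnR : (2:ℝ) ≤ n := by exact_mod_cast hn2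
  obtain ⟨hsk1, hs0, hts, hst, hQval, hPval, hRm, hRQ, hQm, hQlt⟩ :=
    stmt17_core (m:ℝ) (n:ℝ) t R Q P sk s M0 (by exact_mod_cast hm1) hnR hsk2 hsk0
      hsdef hM0def hS ht0 hR0 hQ0 hCS hPQ hPn
  -- zero tail
  have htail : ∀ j, m + 1 ≤ j → j < n → σ j = 0 := by
    have hsplit := Finset.sum_range_add_sum_Ico (fun j => σ j ^2) (by omega : m+1 ≤ n)
    have hhead : ∑ j ∈ Finset.range (m+1), σ j ^2 = Q + t^2 :=
      Finset.sum_range_succ' (fun j => σ j ^2) m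
    have hz : ∑ j ∈ Finset.Ico (m+1) n, σ j ^2 = 0 := by
      have h1 : (Q + t^2) + ∑ j ∈ Finset.Ico (m+1) n, σ j ^2 = P := by
        rw [hPdef, ← hsplit, hhead]
      linarith only [h1, hPval, hQval]
    intro j hj1 hj2
    have h1 := (Finset.sum_eq_zero_iff_of_nonneg (fun j _ => sq_nonneg (σ j))).mp hz j
      (Finset.mem_Ico.mpr ⟨hj1, hj2⟩)
    exact pow_eq_zero_iff (by norm_num) |>.mp h1
  -- middle values all equal to s
  have hmid : ∀ j, 1 ≤ j → j < m + 1 → σ j = s := by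
    have hexp : ∑ i ∈ Finset.range m, (σ (i+1) - R/(m:ℝ))^2 = Q - R^2/(m:ℝ) := by
      have h1 : ∀ i : ℕ, (σ (i+1) - R/(m:ℝ))^2
          = σ (i+1)^2 - (2*R/(m:ℝ)) * σ (i+1) + (R/(m:ℝ))^2 := fun i => by ring
      rw [Finset.sum_congr rfl fun i _ => h1 i]
      rw [Finset.sum_add_distrib, Finset.sum_sub_distrib, ← Finset.mul_sum, ← hRdef, ← hQdef,
        Finset.sum_const, Finset.card_range, nsmul_eq_mul]
      field_simp
      ring
    have hvar : ∑ i ∈ Finset.range m, (σ (i+1) - R/(m:ℝ))^2 = 0 := by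
      rw [hexp, hRQ, mul_div_cancel_left₀ _ (ne_of_gt hmR), sub_self]
    have hall := (Finset.sum_eq_zero_iff_of_nonneg (fun i _ => sq_nonneg _)).mp hvar
    have hRms : R/(m:ℝ) = s := by
      rw [hRm, mul_div_cancel_left₀ _ (ne_of_gt hmR)]
    intro j hj1 hj2
    have hj := hall (j-1) (Finset.mem_range.mpr (by omega))
    have h2 : σ (j-1+1) - R/(m:ℝ) = 0 := pow_eq_zero_iff (n := 2) (by norm_num) |>.mp hj
    have h3 : σ (j-1+1) = s := by rw [← hRms]; linarith only [h2]
    rw [show j - 1 + 1 = j by omega] at h3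
    exact h3
  have hvals : ∀ i : Fin n, |e i| = t ∨ |e i| = s ∨ |e i| = 0 := by
    intro i
    obtain ⟨j, hj, hji⟩ := hmem1 i
    rcases Nat.lt_or_ge j 1 with h1 | h1
    · left
      have hj0 : j = 0 := by omega
      rw [← hji, hj0]
    · rcases Nat.lt_or_ge j (m+1) with h2 | h2
      · right; left; rw [← hji]; exact hmid j h1 h2
      · right; right; rw [← hji]; exact htail j h2 hj
  obtain ⟨i0, _, hi0⟩ := Finset.exists_max_image Finset.univ e ⟨⟨0, hn0⟩, Finset.mem_univ _⟩
  have hti0 : e i0 = t := by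
    have hub : (n:ℝ) * t ≤ e i0 * n := by
      calc (n:ℝ) * t = P := hPval.symm
        _ = ∑ i, e i * y i ^2 := hPy
        _ ≤ ∑ i, e i0 * y i ^2 := Finset.sum_le_sum fun i _ =>
            mul_le_mul_of_nonneg_right (hi0 i (Finset.mem_univ i)) (sq_nonneg _)
        _ = e i0 * ∑ i, y i ^2 := by rw [Finset.mul_sum]
        _ = e i0 * n := by rw [hy1]
    have h1 : t ≤ e i0 := by
      have h2 : t * (n:ℝ) ≤ e i0 * (n:ℝ) := by linarith only [hub]
      exact le_of_mul_le_mul_right h2 (by linarith only [hnR])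
    exact le_antisymm (le_trans (le_abs_self _) (hmax i0)) h1
  have htr : ∑ i, e i = 0 := by
    rw [he, stmt17_trace_eq hA, hAdef]
    exact SimpleGraph.trace_adjMatrix ℝ G
  have hQrest : ∑ i ∈ Finset.univ.erase i0, e i ^2 = (m:ℝ) * s^2 := by
    have h1 : e i0 ^2 + ∑ i ∈ Finset.univ.erase i0, e i ^2 = P := by
      rw [hP_e]; exact Finset.add_sum_erase _ (fun i => e i ^2) (Finset.mem_univ i0)
    rw [hti0] at h1
    linarith only [h1, hPval, hQval, hQm]
  have hsmall : ∀ i ∈ Finset.univ.erase i0, ∃ z : ℤ, e i = s * (z:ℝ) := by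
    intro i hi
    have h1 : e i ^2 ≤ (m:ℝ) * s^2 := by
      rw [← hQrest]
      exact Finset.single_le_sum (fun j _ => sq_nonneg (e j)) hi
    have h2 : |e i| ≠ t := by
      intro hc
      have h3 : e i ^2 = t^2 := by rw [← sq_abs, hc]
      linarith only [h1, h3, hQlt]
    rcases hvals i with hv | hv | hv
    · exact absurd hv h2
    · rcases (abs_eq (le_of_lt hs0)).mp hv with h4 | h4
      · exact ⟨1, by rw [h4]; simp⟩
      · exact ⟨-1, by rw [h4]; push_cast; ring⟩
    · exact ⟨0, by rw [abs_eq_zero.mp hv]; simp⟩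
  choose! g hg using hsmall
  have hsumz : ∑ i ∈ Finset.univ.erase i0, e i
      = s * ((∑ i ∈ Finset.univ.erase i0, g i : ℤ) : ℝ) := by
    rw [Finset.sum_congr rfl hg, ← Finset.mul_sum]
    push_cast
    ring
  have hsplit2 : e i0 + ∑ i ∈ Finset.univ.erase i0, e i = 0 := by
    rw [Finset.add_sum_erase _ _ (Finset.mem_univ i0)]; exact htr
  set Z : ℤ := ∑ i ∈ Finset.univ.erase i0, g i with hZdef
  have hfin : s * ((sk + 1) + (Z:ℝ)) = 0 := by
    rw [hsumz, hti0, hts] at hsplit2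
    linarith only [hsplit2]
  have hskZ : sk = ((-1 - Z : ℤ) : ℝ) := by
    rcases mul_eq_zero.mp hfin with h1 | h1
    · exact absurd h1 (ne_of_gt hs0)
    · push_cast
      linarith only [h1]
  have hznn : 0 ≤ -1 - Z := by
    have h1 : (1:ℝ) ≤ ((-1 - Z : ℤ):ℝ) := hskZ ▸ hsk1
    exact_mod_cast le_trans zero_le_one h1
  refine ⟨(-1 - Z).toNat, ?_⟩
  have hcast : ((m:ℝ)+1) = ((-1-Z : ℤ):ℝ) * ((-1-Z : ℤ):ℝ) := by
    rw [← hskZ, ← hsk2]; ring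
  have hint : ((m+1 : ℕ) : ℤ) = (-1-Z) * (-1-Z) := by exact_mod_cast hcast
  have htn2 : ((-1-Z):ℤ) = ((-1-Z).toNat : ℤ) := (Int.toNat_of_nonneg hznn).symm
  rw [htn2] at hint
  exact_mod_cast hint
end

section
/- Let k ≥ 1 and suppose the class S_k contains a matrix B of order n all of whose rowsums are equal to one another and nonzero. Then for every positive integer t there is a finite simple graph G of order nt with λ_1*(G) + λ_2*(G) + ... + λ_k*(G) ≥ (1 + √k)·nt/2 − k. -/
open Matrix BigOperators

/-- `memS k A` says that `A` belongs to the class `S_k`: `A` is a symmetric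
`(-1,1)`-matrix of order `n ≥ k` with `λ_k^*(A) = n / √k`. -/
def memS (k : ℕ) {n : ℕ} (A : Matrix (Fin n) (Fin n) ℝ) : Prop :=
  k ≤ n ∧ A.IsSymm ∧ (∀ i j, A i j = 1 ∨ A i j = -1) ∧
    singval A k = (n : ℝ) / Real.sqrt k


lemma listMapSum (g : ℝ → ℝ) : ∀ (l : List ℝ),
    (l.map g).sum = ∑ i ∈ Finset.range l.length, g (l.getD i 0)
  | [] => by simp
  | a :: l => by
    rw [List.map_cons, List.sum_cons, listMapSum g l, List.length_cons,
      Finset.sum_range_succ']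
    simp [List.getD, add_comm]

lemma sortedStruct {l : List ℝ} (hs : l.Pairwise (· ≤ ·)) (hnn : ∀ x ∈ l, 0 ≤ x)
    {N k : ℕ} (hlen : l.length = N) (hk1 : 1 ≤ k) (hkN : k ≤ N) {c : ℝ} (hc0 : 0 ≤ c)
    (hc : l.getD (N - k) 0 = c) (hsum : (l.map (fun x => x ^ 2)).sum = k * c ^ 2) :
    ∀ i, i < N → l.getD i 0 = if N - k ≤ i then c else 0 := by
  have hmono : ∀ i j, i ≤ j → j < N → l.getD i 0 ≤ l.getD j 0 := by
    intro i j hij hj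
    rcases eq_or_lt_of_le hij with rfl | hij
    · exact le_rfl
    · rw [List.getD_eq_getElem l 0 (by omega), List.getD_eq_getElem l 0 (by omega)]
      exact List.pairwise_iff_getElem.1 hs i j (by omega) (by omega) hij
  have hnn' : ∀ i, i < N → 0 ≤ l.getD i 0 := by
    intro i hi
    rw [List.getD_eq_getElem l 0 (by omega)]
    exact hnn _ (List.getElem_mem _)
  -- split the sum of squares
  have hsplit : (∑ i ∈ Finset.range N, (l.getD i 0) ^ 2) = (k : ℝ) * c ^ 2 := by
    rw [← hsum, listMapSum, hlen]
  have h1 : ∑ i ∈ Finset.Ico 0 (N - k), (l.getD i 0) ^ 2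
      + ∑ i ∈ Finset.Ico (N - k) N, (l.getD i 0) ^ 2 = (k : ℝ) * c ^ 2 := by
    rw [Finset.sum_Ico_consecutive _ (by omega) (by omega), ← Finset.range_eq_Ico] at *
    exact hsplit
  have hcard : (Finset.Ico (N - k) N).card = k := by
    rw [Nat.card_Ico]; omega
  have hge : ∀ i ∈ Finset.Ico (N - k) N, c ≤ l.getD i 0 := by
    intro i hi
    rw [Finset.mem_Ico] at hi
    rw [← hc]
    exact hmono _ _ hi.1 hi.2
  have hlow : (k : ℝ) * c ^ 2 ≤ ∑ i ∈ Finset.Ico (N - k) N, (l.getD i 0) ^ 2 := by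
    calc (k : ℝ) * c ^ 2 = ∑ _i ∈ Finset.Ico (N - k) N, c ^ 2 := by
          rw [Finset.sum_const, hcard, nsmul_eq_mul]
      _ ≤ _ := Finset.sum_le_sum (fun i hi => by
          have := hge i hi
          nlinarith)
  have hfirst : ∀ i ∈ Finset.Ico 0 (N - k), (l.getD i 0) ^ 2 = 0 := by
    have h0 : ∑ i ∈ Finset.Ico 0 (N - k), (l.getD i 0) ^ 2 ≤ 0 := by linarith
    have h0' : ∑ i ∈ Finset.Ico 0 (N - k), (l.getD i 0) ^ 2 = 0 := by
      refine le_antisymm h0 (Finset.sum_nonneg fun i hi => sq_nonneg _)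
    exact fun i hi => (Finset.sum_eq_zero_iff_of_nonneg (fun i _ => sq_nonneg _)).1 h0' i hi
  have hsecond : ∀ i ∈ Finset.Ico (N - k) N, l.getD i 0 = c := by
    have hsum2 : ∑ i ∈ Finset.Ico (N - k) N, ((l.getD i 0) ^ 2 - c ^ 2) = 
        ∑ i ∈ Finset.Ico (N - k) N, (l.getD i 0) ^ 2 - (k : ℝ) * c ^ 2 := by
      rw [Finset.sum_sub_distrib, Finset.sum_const, hcard, nsmul_eq_mul]
    have hfz : ∑ i ∈ Finset.Ico 0 (N - k), (l.getD i 0) ^ 2 = 0 :=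
      Finset.sum_eq_zero hfirst
    have h0' : ∑ i ∈ Finset.Ico (N - k) N, ((l.getD i 0) ^ 2 - c ^ 2) = 0 := by
      rw [hsum2]; linarith
    have heach := (Finset.sum_eq_zero_iff_of_nonneg (fun i hi => by
      have := hge i hi; nlinarith)).1 h0'
    intro i hi
    have := heach i hi
    have := hge i hi
    nlinarith
  intro i hi
  by_cases h : N - k ≤ i
  · rw [if_pos h]
    exact hsecond i (Finset.mem_Ico.2 ⟨h, hi⟩)
  · rw [if_neg h]
    have := hfirst i (Finset.mem_Ico.2 ⟨Nat.zero_le _, by omega⟩)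
    exact pow_eq_zero_iff (by norm_num) |>.1 this

section SingAsc
variable {N : ℕ} {A : Matrix (Fin N) (Fin N) ℝ}

lemma singAsc_eq (hA : A.IsHermitian) : singAsc A
    = (Finset.univ.val.map (fun i => |hA.eigenvalues i|)).sort (· ≤ ·) := by
  unfold singAsc
  rw [dif_pos hA]

lemma singAsc_length (hA : A.IsHermitian) : (singAsc A).length = N := by
  rw [singAsc_eq hA, Multiset.length_sort, Multiset.card_map]
  simp

lemma singAsc_sorted (hA : A.IsHermitian) : (singAsc A).Pairwise (· ≤ ·) := by
  rw [singAsc_eq hA]; exact Multiset.pairwise_sort _ _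

lemma singAsc_mem (hA : A.IsHermitian) {x : ℝ} (hx : x ∈ singAsc A) : ∃ j, x = |hA.eigenvalues j| := by
  rw [singAsc_eq hA, Multiset.mem_sort, Multiset.mem_map] at hx
  obtain ⟨j, _, hj⟩ := hx
  exact ⟨j, hj.symm⟩

lemma singAsc_nonneg (hA : A.IsHermitian) {x : ℝ} (hx : x ∈ singAsc A) : 0 ≤ x := by
  obtain ⟨j, rfl⟩ := singAsc_mem hA hx
  exact abs_nonneg _

lemma singAsc_map_sum (hA : A.IsHermitian) (g : ℝ → ℝ) :
    ((singAsc A).map g).sum = ∑ j, g (|hA.eigenvalues j|) := by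
  have h1 : ((singAsc A).map g : Multiset ℝ)
      = Finset.univ.val.map (fun j => g (|hA.eigenvalues j|)) := by
    rw [← Multiset.map_coe, singAsc_eq hA, Multiset.sort_eq, Multiset.map_map]
    rfl
  have h2 := congrArg Multiset.sum h1
  rw [Multiset.sum_coe] at h2
  rw [h2]
  rfl
end SingAsc

lemma kyFan {N : ℕ} {A : Matrix (Fin N) (Fin N) ℝ} (hA : A.IsHermitian)
    {k : ℕ} (hk1 : 1 ≤ k) (hkN : k ≤ N)
    {ι : Type} [Fintype ι] [DecidableEq ι] (T : Finset ι) (hT : T.card = k)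
    (x : ι → Fin N → ℝ)
    (hortho : ∀ p ∈ T, ∀ q ∈ T, x p ⬝ᵥ x q = if p = q then 1 else 0) :
    ∑ p ∈ T, |x p ⬝ᵥ (A *ᵥ x p)| ≤ ∑ i ∈ Finset.range k, singval A (i + 1) := by
  classical
  set e := hA.eigenvectorBasis with he
  set ν := hA.eigenvalues with hν
  set y : ι → EuclideanSpace ℝ (Fin N) := fun p => (WithLp.equiv 2 _).symm (x p) with hy
  set d : ι → Fin N → ℝ := fun p j => (inner ℝ (e j) (y p) : ℝ) with hd
  have hyx : ∀ p (i : Fin N), y p i = x p i := by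
    intro p i; rw [hy]; rfl
  have hinner : ∀ p q, (inner ℝ (y p) (y q) : ℝ) = x p ⬝ᵥ x q := by
    intro p q
    rw [PiLp.inner_apply]
    simp only [RCLike.inner_apply, conj_trivial, hyx]
    exact Finset.sum_congr rfl fun _ _ => mul_comm _ _
  have hLe : ∀ j, Matrix.toEuclideanLin A (e j) = ν j • e j := by
    intro j
    apply (WithLp.equiv 2 _).injective
    simp only [toEuclideanLin_apply, Equiv.apply_symm_apply]
    exact hA.mulVec_eigenvectorBasis j
  have hrepr : ∀ p, y p = ∑ j, d p j • e j := fun p => (e.sum_repr' (y p)).symm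
  have hquad : ∀ p, x p ⬝ᵥ (A *ᵥ x p) = ∑ j, ν j * (d p j) ^ 2 := by
    intro p
    have hdot : x p ⬝ᵥ (A *ᵥ x p) = (inner ℝ (y p) (Matrix.toEuclideanLin A (y p)) : ℝ) := by
      rw [PiLp.inner_apply]
      simp only [RCLike.inner_apply, conj_trivial]
      have : Matrix.toEuclideanLin A (y p) = (WithLp.equiv 2 _).symm (A *ᵥ x p) := by
        rw [toEuclideanLin_apply, hy]; simp
      rw [this]
      simp only [WithLp.equiv_symm_apply, PiLp.toLp_apply, hyx]
      exact Finset.sum_congr rfl fun _ _ => mul_comm _ _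
    rw [hdot]
    have hL : Matrix.toEuclideanLin A (y p) = ∑ j, (d p j * ν j) • e j := by
      conv_lhs => rw [hrepr p]
      rw [map_sum]
      exact Finset.sum_congr rfl fun j _ => by rw [_root_.map_smul, hLe j, smul_smul]
    rw [hL, inner_sum]
    refine Finset.sum_congr rfl fun j _ => ?_
    rw [real_inner_smul_right, ← real_inner_comm]
    show d p j * ν j * d p j = ν j * d p j ^ 2
    ring
  have hnorm1 : ∀ p ∈ T, ∑ j, (d p j) ^ 2 = 1 := by
    intro p hp
    have h1 := e.sum_inner_mul_inner (y p) (y p)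
    rw [hinner, hortho p hp p hp, if_pos rfl] at h1
    rw [← h1]
    refine Finset.sum_congr rfl fun j _ => ?_
    rw [← real_inner_comm (y p) (e j)]
    show (d p j) ^ 2 = d p j * d p j
    ring
  have hON : Orthonormal ℝ (fun p : {p // p ∈ T} => y p) := by
    rw [orthonormal_iff_ite]
    intro p q
    rw [hinner, hortho p p.2 q q.2]
    by_cases h : p = q
    · rw [if_pos h, if_pos (Subtype.ext_iff.1 h)]
    · rw [if_neg h, if_neg (fun hc => h (Subtype.ext hc))]
  have hBessel : ∀ j, ∑ p ∈ T, (d p j) ^ 2 ≤ 1 := by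
    intro j
    have h1 := hON.sum_inner_products_le (x := e j) (s := Finset.univ)
    have h2 : ‖e j‖ ^ 2 = 1 := by
      rw [e.orthonormal.1 j]; norm_num
    rw [h2] at h1
    have h3 : ∀ p : {p // p ∈ T}, ‖(inner ℝ (y (p:ι)) (e j) : ℝ)‖ ^ 2 = d (p:ι) j ^ 2 := by
      intro p
      rw [real_inner_comm]
      show ‖d (p:ι) j‖ ^ 2 = _
      rw [Real.norm_eq_abs, sq_abs]
    rw [Finset.sum_congr rfl (fun p _ => h3 p)] at h1
    rw [Finset.univ_eq_attach, Finset.sum_attach T (fun p => d p j ^ 2)] at h1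
    exact h1
  set D : Fin N → ℝ := fun j => ∑ p ∈ T, (d p j) ^ 2 with hD
  have hD0 : ∀ j, 0 ≤ D j := fun j => Finset.sum_nonneg fun p _ => sq_nonneg _
  have hDsum : ∑ j, D j = (k : ℝ) := by
    rw [hD]
    rw [Finset.sum_comm]
    rw [Finset.sum_congr rfl (fun p hp => hnorm1 p hp)]
    simp [hT]
  -- the sorted list of singular values
  set l := singAsc A with hl
  have hlen : l.length = N := singAsc_length hA
  set θ := singval A k with hθ
  have hθl : θ = l.getD (N - k) 0 := rfl
  have hθ0 : 0 ≤ θ := by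
    rw [hθl]
    apply singAsc_nonneg hA
    rw [List.getD_eq_getElem l 0 (by omega)]
    exact List.getElem_mem _
  have hmono : ∀ i j, i ≤ j → j < N → l.getD i 0 ≤ l.getD j 0 := by
    intro i j hij hj
    rcases eq_or_lt_of_le hij with rfl | hij
    · exact le_rfl
    · have hsort : l.Pairwise (· ≤ ·) := singAsc_sorted hA
      rw [List.getD_eq_getElem l 0 (by omega), List.getD_eq_getElem l 0 (by omega)]
      exact List.pairwise_iff_getElem.1 hsort i j (by omega) (by omega) hij
  have stepA : ∑ p ∈ T, |x p ⬝ᵥ (A *ᵥ x p)| ≤ ∑ j, |ν j| * D j := by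
    calc ∑ p ∈ T, |x p ⬝ᵥ (A *ᵥ x p)| = ∑ p ∈ T, |∑ j, ν j * d p j ^ 2| := by
          exact Finset.sum_congr rfl fun p _ => by rw [hquad p]
      _ ≤ ∑ p ∈ T, ∑ j, |ν j| * d p j ^ 2 := Finset.sum_le_sum fun p _ =>
          (Finset.abs_sum_le_sum_abs _ _).trans (le_of_eq (Finset.sum_congr rfl fun j _ => by
            rw [abs_mul, abs_of_nonneg (sq_nonneg (d p j))]))
      _ = ∑ j, |ν j| * D j := by
          rw [Finset.sum_comm]
          exact Finset.sum_congr rfl fun j _ => by rw [hD, Finset.mul_sum]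
  have stepB : ∑ j, |ν j| * D j ≤ (∑ j, max (|ν j| - θ) 0) + θ * (k : ℝ) := by
    have hpt : ∀ j, |ν j| * D j ≤ max (|ν j| - θ) 0 + θ * D j := by
      intro j
      rcases le_or_gt θ (|ν j|) with h | h
      · rw [max_eq_left (by linarith)]
        have h1 := hBessel j
        have h0 := hD0 j
        nlinarith
      · rw [max_eq_right (by linarith)]
        have h0 := hD0 j
        nlinarith
    calc ∑ j, |ν j| * D j ≤ ∑ j, (max (|ν j| - θ) 0 + θ * D j) :=
          Finset.sum_le_sum fun j _ => hpt j
      _ = (∑ j, max (|ν j| - θ) 0) + θ * (k : ℝ) := by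
          rw [Finset.sum_add_distrib, ← Finset.mul_sum, hDsum]
  have stepC : ∑ j, max (|ν j| - θ) 0
      = (∑ i ∈ Finset.range k, singval A (i + 1)) - θ * k := by
    have h1 : ∑ j, max (|ν j| - θ) 0 = (l.map (fun a => max (a - θ) 0)).sum :=
      (singAsc_map_sum hA (fun a => max (a - θ) 0)).symm
    rw [h1, listMapSum, hlen]
    conv_lhs => rw [Finset.range_eq_Ico,
      ← Finset.sum_Ico_consecutive _ (Nat.zero_le (N - k)) (by omega : N - k ≤ N)]
    have hfirst : ∑ i ∈ Finset.Ico 0 (N - k), max (l.getD i 0 - θ) 0 = 0 :=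
      Finset.sum_eq_zero fun i hi => by
        rw [Finset.mem_Ico] at hi
        have hle := hmono i (N - k) (by omega) (by omega)
        rw [max_eq_right (by rw [hθl]; linarith)]
    have hsecond : ∑ i ∈ Finset.Ico (N - k) N, max (l.getD i 0 - θ) 0
        = ∑ i ∈ Finset.Ico (N - k) N, (l.getD i 0 - θ) :=
      Finset.sum_congr rfl fun i hi => by
        rw [Finset.mem_Ico] at hi
        have hle := hmono (N - k) i hi.1 hi.2
        rw [max_eq_left (by rw [hθl]; linarith)]
    rw [hfirst, hsecond, zero_add]
    have hrk : ∑ i ∈ Finset.Ico (N - k) N, (l.getD i 0 - θ)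
        = ∑ i ∈ Finset.range k, (l.getD (N - 1 - i) 0 - θ) := by
      refine Finset.sum_nbij' (fun i => N - 1 - i) (fun i => N - 1 - i) ?_ ?_ ?_ ?_ ?_
      · intro a ha; simp only [Finset.mem_Ico, Finset.mem_range] at ha ⊢; omega
      · intro a ha; simp only [Finset.mem_Ico, Finset.mem_range] at ha ⊢; omega
      · intro a ha; simp only [Finset.mem_Ico] at ha; show N - 1 - (N - 1 - a) = a; omega
      · intro a ha; simp only [Finset.mem_range] at ha; show N - 1 - (N - 1 - a) = a; omega
      · intro a ha
        rw [Finset.mem_Ico] at ha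
        show l.getD a 0 - θ = l.getD (N - 1 - (N - 1 - a)) 0 - θ
        congr 3
        omega
    rw [hrk, Finset.sum_sub_distrib, Finset.sum_const, Finset.card_range, nsmul_eq_mul]
    congr 1
    refine Finset.sum_congr rfl fun i hi => ?_
    rw [Finset.mem_range] at hi
    show l.getD (N - 1 - i) 0 = l.getD (N - (i + 1)) 0
    · congr 1
      omega
    · exact mul_comm _ _
  calc ∑ p ∈ T, |x p ⬝ᵥ (A *ᵥ x p)| ≤ ∑ j, |ν j| * D j := stepA
    _ ≤ (∑ j, max (|ν j| - θ) 0) + θ * (k : ℝ) := stepB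
    _ = ∑ i ∈ Finset.range k, singval A (i + 1) := by rw [stepC]; ring

set_option maxHeartbeats 2000000 in
theorem stmt19 (k : ℕ) (hk : 1 ≤ k) {n : ℕ} (B : Matrix (Fin n) (Fin n) ℝ)
    (hB : memS k B) (r : ℝ) (hr : r ≠ 0) (hrow : ∀ i, ∑ j, B i j = r) :
    ∀ t : ℕ, 0 < t → ∃ G : SimpleGraph (Fin (n * t)),
      ∑ i ∈ Finset.range k, graphSing G (i + 1) ≥
        (1 + Real.sqrt k) * ((n : ℝ) * t) / 2 - k := by
  classical
  intro t ht
  obtain ⟨hkn, hsymm, hpm, hsing⟩ := hB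
  have hBH : B.IsHermitian := hsymm
  have hn1 : 1 ≤ n := le_trans hk hkn
  have hkN : k ≤ n * t := le_trans hkn (Nat.le_mul_of_pos_right n ht)
  set c : ℝ := (n : ℝ) / Real.sqrt k with hcdef
  have hsk : (0 : ℝ) < Real.sqrt k := Real.sqrt_pos.2 (by exact_mod_cast hk)
  have hc0 : 0 < c := div_pos (by exact_mod_cast hn1) hsk
  set μ := hBH.eigenvalues with hμ
  set e := hBH.eigenvectorBasis with he
  set v : Fin n → Fin n → ℝ := fun p a => e p a with hv
  have heig : ∀ p, B *ᵥ v p = μ p • v p := fun p => hBH.mulVec_eigenvectorBasis p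
  have hvON : ∀ p w, v p ⬝ᵥ v w = if p = w then 1 else 0 := by
    intro p w
    have h := orthonormal_iff_ite.1 e.orthonormal p w
    rw [PiLp.inner_apply] at h
    simp only [RCLike.inner_apply, conj_trivial] at h
    exact (Finset.sum_congr rfl fun x _ => mul_comm _ _).trans h
  -- inner products with EuclideanSpace vectors
  have hinner_e : ∀ (u : Fin n → ℝ) (p : Fin n),
      (inner ℝ ((WithLp.equiv 2 (Fin n → ℝ)).symm u) (e p) : ℝ) = u ⬝ᵥ v p := by
    intro u p
    rw [PiLp.inner_apply]
    simp only [RCLike.inner_apply, conj_trivial, WithLp.equiv_symm_apply, PiLp.toLp_apply]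
    exact Finset.sum_congr rfl fun _ _ => mul_comm _ _
  have hinner_e' : ∀ (u : Fin n → ℝ) (p : Fin n),
      (inner ℝ (e p) ((WithLp.equiv 2 (Fin n → ℝ)).symm u) : ℝ) = u ⬝ᵥ v p := by
    intro u p
    rw [real_inner_comm]
    exact hinner_e u p
  -- Parseval-type identity in coordinates
  have hpars : ∀ (u : Fin n → ℝ), ∑ p, (u ⬝ᵥ v p) * (u ⬝ᵥ v p) = u ⬝ᵥ u := by
    intro u
    have h := e.sum_inner_mul_inner ((WithLp.equiv 2 (Fin n → ℝ)).symm u)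
      ((WithLp.equiv 2 (Fin n → ℝ)).symm u)
    rw [Finset.sum_congr rfl (fun p _ => by rw [hinner_e u p, hinner_e' u p])] at h
    rw [h, PiLp.inner_apply]
    simp only [RCLike.inner_apply, conj_trivial, WithLp.equiv_symm_apply, PiLp.toLp_apply]
    rfl
  -- Frobenius norm identity : sum of squared eigenvalues
  have hfro : ∑ p, μ p ^ 2 = (n : ℝ) ^ 2 := by
    have h1 : ∀ p, μ p ^ 2 = (B *ᵥ v p) ⬝ᵥ (B *ᵥ v p) := by
      intro p
      rw [heig p, smul_dotProduct, dotProduct_smul, hvON p p, if_pos rfl]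
      simp [sq]
    have h2 : ∀ a, (fun x => B a x) ⬝ᵥ (fun x => B a x) = (n : ℝ) := by
      intro a
      have : ∀ x, B a x * B a x = 1 := by
        intro x; rcases hpm a x with h | h <;> rw [h] <;> norm_num
      show ∑ x, B a x * B a x = (n : ℝ)
      rw [Finset.sum_congr rfl fun x _ => this x]
      simp
    calc ∑ p, μ p ^ 2 = ∑ p, (B *ᵥ v p) ⬝ᵥ (B *ᵥ v p) :=
          Finset.sum_congr rfl fun p _ => h1 p
      _ = ∑ p, ∑ a, ((fun x => B a x) ⬝ᵥ v p) * ((fun x => B a x) ⬝ᵥ v p) := by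
          refine Finset.sum_congr rfl fun p _ => ?_
          show ∑ a, (B *ᵥ v p) a * (B *ᵥ v p) a = _
          exact Finset.sum_congr rfl fun a _ => rfl
      _ = ∑ a, ∑ p, ((fun x => B a x) ⬝ᵥ v p) * ((fun x => B a x) ⬝ᵥ v p) :=
          Finset.sum_comm
      _ = ∑ a : Fin n, (n : ℝ) := Finset.sum_congr rfl fun a _ => by
          rw [hpars (fun x => B a x), h2 a]
      _ = (n : ℝ) ^ 2 := by simp [sq]
  have hkc : (k : ℝ) * c ^ 2 = (n : ℝ) ^ 2 := by
    rw [hcdef, div_pow, Real.sq_sqrt (by positivity : (0:ℝ) ≤ (k:ℝ))]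
    field_simp
  -- structure of the eigenvalues of B
  have hstruct : ∀ p, μ p = 0 ∨ |μ p| = c := by
    have hsum : ((singAsc B).map (fun x => x ^ 2)).sum = (k : ℝ) * c ^ 2 := by
      rw [singAsc_map_sum hBH (fun x => x ^ 2), hkc]
      rw [← hfro]
      exact Finset.sum_congr rfl fun p _ => by rw [sq_abs]
    have hc : (singAsc B).getD (n - k) 0 = c := hsing
    have hall := sortedStruct (singAsc_sorted hBH) (fun x hx => singAsc_nonneg hBH hx)
      (singAsc_length hBH) hk hkn (le_of_lt hc0) hc hsum
    intro p
    have hmem : |μ p| ∈ singAsc B := by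
      rw [singAsc_eq hBH, Multiset.mem_sort, Multiset.mem_map]
      exact ⟨p, by simp, rfl⟩
    obtain ⟨i, hi, hget⟩ := List.mem_iff_getElem.1 hmem
    have hlen : (singAsc B).length = n := singAsc_length hBH
    have := hall i (by omega)
    rw [List.getD_eq_getElem _ 0 hi, hget] at this
    by_cases hcase : n - k ≤ i
    · right; rw [this, if_pos hcase]
    · left
      rw [if_neg hcase] at this
      exact abs_eq_zero.1 this
  set T : Finset (Fin n) := Finset.univ.filter (fun p => μ p ≠ 0) with hT
  have hTc : ∀ p ∈ T, |μ p| = c := by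
    intro p hp
    rw [hT, Finset.mem_filter] at hp
    rcases hstruct p with h | h
    · exact absurd h hp.2
    · exact h
  have hTcard : T.card = k := by
    have h1 : ∑ p, μ p ^ 2 = ∑ p ∈ T, μ p ^ 2 :=
      (Finset.sum_subset (Finset.subset_univ T) (fun p _ hp => by
        rcases hstruct p with h | h
        · rw [h]; ring
        · exact absurd (Finset.mem_filter.2 ⟨Finset.mem_univ p, fun h0 => by
            rw [h0, abs_zero] at h; exact absurd h.symm (ne_of_gt hc0)⟩) hp)).symm
    have h2 : ∑ p ∈ T, μ p ^ 2 = (T.card : ℝ) * c ^ 2 := by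
      rw [Finset.sum_congr rfl (fun p hp => by rw [← sq_abs, hTc p hp]), Finset.sum_const,
        nsmul_eq_mul]
    have h3 : (T.card : ℝ) * c ^ 2 = (k : ℝ) * c ^ 2 := by
      rw [← h2, ← h1, hfro, hkc]
    have := mul_right_cancel₀ (by positivity : c ^ 2 ≠ 0) h3
    exact_mod_cast this
  -- rowsum eigenvector facts
  set s : Fin n → ℝ := fun p => (fun _ => (1:ℝ)) ⬝ᵥ v p with hs
  have hone : B *ᵥ (fun _ => (1:ℝ)) = r • (fun _ => (1:ℝ)) := by
    funext i
    show ∑ j, B i j * 1 = r • (1:ℝ)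
    rw [Finset.sum_congr rfl fun j _ => mul_one (B i j), hrow i]
    simp
  have hμs : ∀ p, μ p * s p = r * s p := by
    intro p
    have h1 : (B *ᵥ v p) ⬝ᵥ (fun _ => (1:ℝ)) = μ p * s p := by
      rw [heig p, smul_dotProduct, hs, dotProduct_comm]
      simp [smul_eq_mul]
    have h2 : (B *ᵥ v p) ⬝ᵥ (fun _ => (1:ℝ)) = r * s p := by
      rw [dotProduct_comm, dotProduct_mulVec, ← mulVec_transpose, hsymm, hone,
        smul_dotProduct]
      simp [smul_eq_mul]
      exact Or.inl rfl
    rw [← h1, h2]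
  have hsz : ∀ p, μ p ≠ r → s p = 0 := by
    intro p hp
    by_contra hs0
    exact hp (mul_right_cancel₀ hs0 (hμs p))
  have hssq : ∑ p, s p ^ 2 = (n : ℝ) := by
    have := hpars (fun _ => (1:ℝ))
    have h2 : (fun _ : Fin n => (1:ℝ)) ⬝ᵥ (fun _ => (1:ℝ)) = (n : ℝ) := by
      show ∑ _x : Fin n, (1:ℝ) * 1 = (n:ℝ); simp
    rw [h2] at this
    rw [← this]
    exact Finset.sum_congr rfl fun p _ => by rw [sq]
  have hrc : |r| = c := by
    have hex : ∃ p, s p ≠ 0 := by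
      by_contra hno
      push_neg at hno
      have h0 : ∑ p, s p ^ 2 = 0 := Finset.sum_eq_zero fun p _ => by rw [hno p]; ring
      rw [hssq] at h0
      have : n = 0 := by exact_mod_cast h0
      omega
    obtain ⟨p, hp⟩ := hex
    have hμp : μ p = r := by
      by_contra hne
      exact hp (hsz p hne)
    have hpT : p ∈ T := Finset.mem_filter.2 ⟨Finset.mem_univ p, by rw [hμp]; exact hr⟩
    rw [← hμp]
    exact hTc p hpT
    -- sign normalization
  set ε : ℝ := if 0 < r then 1 else -1 with hεdef
  have hε1 : ε = 1 ∨ ε = -1 := by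
    rw [hεdef]; split <;> simp
  have hεr : ε * r = c := by
    rw [hεdef, ← hrc]
    split
    · rw [one_mul, abs_of_pos (by assumption)]
    · rw [abs_of_neg (by rcases lt_or_gt_of_ne hr with h | h; exact h; tauto)]
      ring
  have hrε : r = ε * c := by
    rcases hε1 with h | h <;> rw [h] at hεr ⊢ <;> linarith
  -- the graph
  set q : Fin (n * t) → Fin n := fun i => ((finProdFinEquiv.symm i : Fin n × Fin t)).1 with hq
  set G : SimpleGraph (Fin (n * t)) :=
    { Adj := fun i j => i ≠ j ∧ ε * B (q i) (q j) = 1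
      symm := by
        constructor
        intro i j h
        refine ⟨h.1.symm, ?_⟩
        rw [Matrix.IsSymm.apply hsymm (q i) (q j)]
        exact h.2
      loopless := ⟨fun i h => h.1 rfl⟩ } with hG
  refine ⟨G, ?_⟩
  -- fiber sums
  have hfib : ∀ g : Fin n → ℝ, ∑ i : Fin (n * t), g (q i) = (t : ℝ) * ∑ a, g a := by
    intro g
    rw [← Equiv.sum_comp (finProdFinEquiv : Fin n × Fin t ≃ Fin (n * t)) (fun i => g (q i))]
    simp only [hq, Equiv.symm_apply_apply]
    rw [Fintype.sum_prod_type]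
    rw [Finset.sum_congr rfl (fun a _ => Finset.sum_const (g a))]
    rw [Finset.mul_sum]
    refine Finset.sum_congr rfl fun a _ => ?_
    simp [mul_comm]
  have hfib2 : ∀ g : Fin n → Fin n → ℝ,
      ∑ i : Fin (n * t), ∑ j : Fin (n * t), g (q i) (q j)
        = (t : ℝ) * ((t : ℝ) * ∑ a, ∑ b, g a b) := by
    intro g
    have h1 : ∀ i : Fin (n * t), ∑ j : Fin (n * t), g (q i) (q j)
        = (t : ℝ) * ∑ b, g (q i) b := fun i => hfib (fun b => g (q i) b)
    rw [Finset.sum_congr rfl fun i _ => h1 i, ← Finset.mul_sum,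
      hfib (fun a => ∑ b, g a b)]
  -- the adjacency matrix and its entries
  set A := SimpleGraph.adjMatrix ℝ G with hA
  have hAsymm : A.IsSymm := SimpleGraph.isSymm_adjMatrix G
  have hAH : A.IsHermitian := hAsymm
  have hGAdj : ∀ i j, G.Adj i j ↔ (i ≠ j ∧ ε * B (q i) (q j) = 1) := fun i j => Iff.rfl
  have hApm : ∀ a b, ε * B a b = 1 ∨ ε * B a b = -1 := by
    intro a b
    rcases hε1 with h | h <;> rcases hpm a b with h2 | h2 <;> rw [h, h2] <;> norm_num
  have hAe : ∀ i j, A i j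
      = (1 + ε * B (q i) (q j)) / 2 - (if i = j then (1 + ε * B (q i) (q i)) / 2 else 0) := by
    intro i j
    rw [hA, SimpleGraph.adjMatrix_apply]
    by_cases hij : i = j
    · subst hij
      rw [if_pos rfl, if_neg (fun h : G.Adj i i => (hGAdj i i).1 h |>.1 rfl)]
      ring
    · rw [if_neg hij]
      rcases hApm (q i) (q j) with h1 | h1
      · rw [if_pos ((hGAdj i j).2 ⟨hij, h1⟩), h1]
        ring
      · rw [if_neg (fun h : G.Adj i j => by
          have := ((hGAdj i j).1 h).2
          rw [h1] at this
          norm_num at this), h1]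
        norm_num
  -- the test vectors
  set st : ℝ := Real.sqrt t with hstdef
  have hst0 : 0 < st := Real.sqrt_pos.2 (by exact_mod_cast ht)
  have hst2 : st ^ 2 = (t : ℝ) := Real.sq_sqrt (by positivity)
  set x : Fin n → Fin (n * t) → ℝ := fun p i => v p (q i) / st with hx
  have hxdot : ∀ p w, x p ⬝ᵥ x w = if p = w then 1 else 0 := by
    intro p w
    have h1 : x p ⬝ᵥ x w = (∑ i : Fin (n * t), (fun a => v p a * v w a) (q i)) / st ^ 2 := by
      show (∑ i, (v p (q i) / st) * (v w (q i) / st)) = _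
      rw [Finset.sum_div]
      exact Finset.sum_congr rfl fun i _ => by ring
    rw [h1, hfib (fun a => v p a * v w a), hst2]
    have ht0 : (t : ℝ) ≠ 0 := by positivity
    rw [mul_div_cancel_left₀ _ ht0]
    exact hvON p w
  have hxnorm : ∀ p, ∑ i, x p i * x p i = 1 := by
    intro p
    have h := hxdot p p
    rw [if_pos rfl] at h
    exact h
  set E : Fin n → ℝ := fun p => ∑ i, (1 + ε * B (q i) (q i)) / 2 * (x p i * x p i) with hE
  have hE0 : ∀ p, 0 ≤ E p := by
    intro p
    refine Finset.sum_nonneg fun i _ => ?_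
    have hsq : 0 ≤ x p i * x p i := mul_self_nonneg _
    rcases hApm (q i) (q i) with h | h <;> rw [h] <;> nlinarith
  have hE1 : ∀ p, E p ≤ 1 := by
    intro p
    rw [← hxnorm p]
    refine Finset.sum_le_sum fun i _ => ?_
    have hsq : 0 ≤ x p i * x p i := mul_self_nonneg _
    rcases hApm (q i) (q i) with h | h <;> rw [h] <;> nlinarith
  have hxsum : ∀ p, ∑ i, x p i = st * s p := by
    intro p
    have h1 : ∑ i : Fin (n * t), x p i = (∑ i : Fin (n * t), v p (q i)) / st := by
      rw [Finset.sum_div]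
    have hsp : ∑ a, v p a = s p := by
      rw [hs]
      show _ = ∑ a, 1 * v p a
      exact Finset.sum_congr rfl fun a _ => (one_mul _).symm
    rw [h1, hfib (v p), hsp, ← hst2, sq, mul_assoc, mul_div_cancel_left₀ _ (ne_of_gt hst0)]
  have hquadA : ∀ p, x p ⬝ᵥ (A *ᵥ x p)
      = (t : ℝ) / 2 * (s p ^ 2 + ε * μ p) - E p := by
    intro p
    have hgen : x p ⬝ᵥ (A *ᵥ x p) = ∑ i, ∑ j, A i j * (x p i * x p j) := by
      show ∑ i, x p i * (∑ j, A i j * x p j) = _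
      refine Finset.sum_congr rfl fun i _ => ?_
      rw [Finset.mul_sum]
      exact Finset.sum_congr rfl fun j _ => by ring
    rw [hgen]
    have hsplit : ∀ i j : Fin (n * t), A i j * (x p i * x p j)
        = (1/2 : ℝ) * (x p i * x p j) + (ε/2) * (B (q i) (q j) * (x p i * x p j))
          - (if i = j then (1 + ε * B (q i) (q i)) / 2 * (x p i * x p j) else 0) := by
      intro i j
      rw [hAe i j]
      by_cases hij : i = j
      · rw [if_pos hij, if_pos hij]
        ring
      · rw [if_neg hij, if_neg hij]
        ring
    rw [Finset.sum_congr rfl fun i _ => Finset.sum_congr rfl fun j _ => hsplit i j]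
    have hsep : ∀ i, ∑ j, ((1/2 : ℝ) * (x p i * x p j) + (ε/2) * (B (q i) (q j) * (x p i * x p j))
          - (if i = j then (1 + ε * B (q i) (q i)) / 2 * (x p i * x p j) else 0))
        = (∑ j, (1/2 : ℝ) * (x p i * x p j)) + (∑ j, (ε/2) * (B (q i) (q j) * (x p i * x p j)))
          - (1 + ε * B (q i) (q i)) / 2 * (x p i * x p i) := by
      intro i
      rw [Finset.sum_sub_distrib, Finset.sum_add_distrib, Finset.sum_ite_eq,
        if_pos (Finset.mem_univ i)]
    rw [Finset.sum_congr rfl fun i _ => hsep i]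
    rw [Finset.sum_sub_distrib, Finset.sum_add_distrib]
    have hS1 : ∑ i, ∑ j, (1/2 : ℝ) * (x p i * x p j) = (t:ℝ)/2 * s p ^ 2 := by
      have h1 : ∑ i, ∑ j, (1/2 : ℝ) * (x p i * x p j)
          = (1/2 : ℝ) * ((∑ i, x p i) * (∑ j, x p j)) := by
        rw [Finset.sum_mul_sum, Finset.mul_sum]
        refine Finset.sum_congr rfl fun i _ => ?_
        rw [Finset.mul_sum]
      rw [h1, hxsum p, ← hst2]
      ring
    have hS2 : ∑ i, ∑ j, (ε/2 : ℝ) * (B (q i) (q j) * (x p i * x p j))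
        = (t:ℝ)/2 * (ε * μ p) := by
      have h1 : ∀ i j : Fin (n * t), (ε/2 : ℝ) * (B (q i) (q j) * (x p i * x p j))
          = (ε/(2 * st^2)) * ((fun a b => B a b * (v p a * v p b)) (q i) (q j)) := by
        intro i j
        show (ε/2 : ℝ) * (B (q i) (q j) * (v p (q i)/st * (v p (q j)/st))) = _
        have hstne : st ≠ 0 := ne_of_gt hst0
        field_simp
        try ring
        try tauto
      rw [Finset.sum_congr rfl fun i _ => Finset.sum_congr rfl fun j _ => h1 i j]
      have h2 : ∑ i, ∑ j, (ε/(2 * st^2)) * (fun a b => B a b * (v p a * v p b)) (q i) (q j)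
          = (ε/(2 * st^2)) * ∑ i, ∑ j, (fun a b => B a b * (v p a * v p b)) (q i) (q j) := by
        rw [Finset.mul_sum]
        exact Finset.sum_congr rfl fun i _ => by rw [Finset.mul_sum]
      rw [h2, hfib2 (fun a b => B a b * (v p a * v p b))]
      have h3 : ∑ a, ∑ b, B a b * (v p a * v p b) = μ p := by
        have hrow2 : ∀ a, ∑ b, B a b * (v p a * v p b) = v p a * ((B *ᵥ v p) a) := by
          intro a
          show _ = v p a * ∑ b, B a b * v p b
          rw [Finset.mul_sum]
          exact Finset.sum_congr rfl fun b _ => by ring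
        rw [Finset.sum_congr rfl fun a _ => hrow2 a]
        have h4 : ∀ a, v p a * ((B *ᵥ v p) a) = μ p * (v p a * v p a) := by
          intro a
          rw [heig p]
          show v p a * (μ p • v p) a = _
          rw [Pi.smul_apply, smul_eq_mul]
          ring
        rw [Finset.sum_congr rfl fun a _ => h4 a, ← Finset.mul_sum]
        have h5 : ∑ a, v p a * v p a = 1 := by
          have := hvON p p
          rw [if_pos rfl] at this
          exact this
        rw [h5, mul_one]
      rw [h3, hst2]
      have ht0 : (t : ℝ) ≠ 0 := by positivity
      field_simp
    rw [hS1, hS2]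
    have hEeq : ∑ i, (1 + ε * B (q i) (q i)) / 2 * (x p i * x p i) = E p := rfl
    rw [hEeq]
    ring
  have hperp : ∀ p ∈ T, (t:ℝ)/2 * (s p ^ 2 + c) - 1 ≤ |x p ⬝ᵥ (A *ᵥ x p)| := by
    intro p hp
    have ht0 : (0:ℝ) ≤ (t:ℝ) := by positivity
    have hems : ε * μ p = c ∨ (ε * μ p = -c ∧ s p = 0) := by
      have habs : |ε * μ p| = c := by
        rw [abs_mul]
        rcases hε1 with h | h <;> rw [h] <;> simp [hTc p hp]
      rcases (abs_eq (le_of_lt hc0)).1 habs with h | h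
      · exact Or.inl h
      · right
        refine ⟨h, hsz p fun hμr => ?_⟩
        rw [hμr, hrε] at h
        rcases hε1 with h1 | h1 <;> rw [h1] at h <;> nlinarith
    have hval : |(t:ℝ)/2 * (s p ^ 2 + ε * μ p)| = (t:ℝ)/2 * (s p ^ 2 + c) := by
      rcases hems with h | ⟨h, hsp⟩
      · rw [h]
        exact abs_of_nonneg (by positivity)
      · rw [h, hsp]
        rw [abs_of_nonpos (by nlinarith)]
        ring
    calc (t:ℝ)/2 * (s p ^ 2 + c) - 1 ≤ |(t:ℝ)/2 * (s p ^ 2 + ε * μ p)| - |E p| := by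
          rw [hval]
          have : |E p| ≤ 1 := abs_le.2 ⟨by linarith [hE0 p], hE1 p⟩
          linarith
      _ ≤ |(t:ℝ)/2 * (s p ^ 2 + ε * μ p) - E p| := abs_sub_abs_le_abs_sub _ _
      _ = |x p ⬝ᵥ (A *ᵥ x p)| := by rw [hquadA p]
  have hsumT : (t:ℝ)/2 * ((n:ℝ) + (k:ℝ) * c) - k ≤ ∑ p ∈ T, |x p ⬝ᵥ (A *ᵥ x p)| := by
    have h1 : ∑ p ∈ T, ((t:ℝ)/2 * (s p ^ 2 + c) - 1) ≤ ∑ p ∈ T, |x p ⬝ᵥ (A *ᵥ x p)| :=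
      Finset.sum_le_sum fun p hp => hperp p hp
    have h3 : ∑ p ∈ T, s p ^ 2 = (n:ℝ) := by
      have h0 : ∀ p ∈ Finset.univ, p ∉ T → s p ^ 2 = 0 := by
        intro p _ hp
        have hμ0 : μ p = 0 := by
          by_contra hne
          exact hp (Finset.mem_filter.2 ⟨Finset.mem_univ p, hne⟩)
        have hs0 : s p = 0 := hsz p (by rw [hμ0]; exact fun h => hr h.symm)
        rw [hs0]
        ring
      rw [Finset.sum_subset (Finset.subset_univ T) h0, hssq]
    have h2 : ∑ p ∈ T, ((t:ℝ)/2 * (s p ^ 2 + c) - 1)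
        = (t:ℝ)/2 * ((n:ℝ) + (k:ℝ) * c) - k := by
      rw [Finset.sum_sub_distrib, Finset.sum_const, hTcard, nsmul_eq_mul, mul_one]
      have h4 : ∑ p ∈ T, ((t:ℝ)/2 * (s p ^ 2 + c)) = (t:ℝ)/2 * ∑ p ∈ T, (s p ^ 2 + c) := by
        rw [Finset.mul_sum]
      rw [h4, Finset.sum_add_distrib, Finset.sum_const, hTcard, nsmul_eq_mul, h3]
    rw [h2] at h1
    exact h1
  have hky := kyFan hAH hk hkN T hTcard x (fun p _ w _ => hxdot p w)
  have hGs : ∑ i ∈ Finset.range k, graphSing G (i + 1)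
      = ∑ i ∈ Finset.range k, singval A (i + 1) := by
    refine Finset.sum_congr rfl fun i _ => ?_
    unfold graphSing
    rw [hA]
    refine congrArg (fun M => singval M (i + 1)) ?_
    ext a b
    by_cases h : G.Adj a b <;> simp [h]
  have hkc2 : (k:ℝ) * c = (n:ℝ) * Real.sqrt k := by
    have hss : Real.sqrt k ^ 2 = (k:ℝ) := Real.sq_sqrt (by positivity)
    rw [hcdef]
    field_simp
    linear_combination (-1 : ℝ) * hss
  rw [ge_iff_le, hGs]
  calc (1 + Real.sqrt k) * ((n:ℝ) * t) / 2 - k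
      = (t:ℝ)/2 * ((n:ℝ) + (n:ℝ) * Real.sqrt k) - k := by ring
    _ = (t:ℝ)/2 * ((n:ℝ) + (k:ℝ) * c) - k := by rw [hkc2]
    _ ≤ ∑ p ∈ T, |x p ⬝ᵥ (A *ᵥ x p)| := hsumT
    _ ≤ ∑ i ∈ Finset.range k, singval A (i + 1) := hky
end
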